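/- The q-Gauss summation: for |q|<1 and parameters with |c/(ab)|<1, ₂φ₁(a,b;c;q,c/(ab)) := Σ_{n≥0} (a;q)_n (b;q)_n / ((c;q)_n (q;q)_n) · (c/(ab))^n equals (c/a;q)_∞ (c/b;q)_∞ / ((c;q)_∞ (c/(ab);q)_∞). -/

import Mathlib

/-!
Heine's argument. Write `S(c)` for the series. Comparing the terms of `S(c)` and `S(cq)` shows
that `(1 - c)(1 - c/(ab)) S(c) - (1 - c/a)(1 - c/b) S(cq)` is a telescoping sum, hence zero.
Iterating this contiguous relation `N` times expresses `S(c)` through finite `q`-shifted factorials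
and `S(cqᴺ)`; as `N → ∞` the factorials tend to the infinite products, and `S(cqᴺ) → 1` by
dominated convergence, the terms being bounded uniformly in `N` by a geometric series.
-/

/-- `(x;q)_n = ∏_{j=0}^{n-1} (1 - x q^j)`. -/
noncomputable def poch (q x : ℂ) (n : ℕ) : ℂ := ∏ j ∈ Finset.range n, (1 - x * q ^ j)

open Filter Topology

lemma Summable.tsum_sub_add_one {G : Type*} [AddCommGroup G] [TopologicalSpace G]
    [IsTopologicalAddGroup G] [T2Space G] {u : ℕ → G} (hu : Summable u) :
    ∑' n, (u n - u (n + 1)) = u 0 := by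
  rw [hu.tsum_sub ((summable_nat_add_iff 1).2 hu), hu.tsum_eq_zero_add, add_sub_cancel_right]

section Pochhammer

variable (q : ℂ)

@[simp]
lemma poch_zero (x : ℂ) : poch q x 0 = 1 :=
  Finset.prod_range_zero _

lemma poch_succ (x : ℂ) (n : ℕ) : poch q x (n + 1) = poch q x n * (1 - x * q ^ n) :=
  Finset.prod_range_succ _ _

lemma poch_add (x : ℂ) (m n : ℕ) : poch q x (m + n) = poch q x m * poch q (x * q ^ m) n := by
  simp [poch, Finset.prod_range_add, pow_add, mul_assoc]

@[simp]
lemma poch_zero_left (n : ℕ) : poch q 0 n = 1 := by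
  simp [poch]

lemma poch_ne_zero {x : ℂ} (h : ∀ j : ℕ, 1 - x * q ^ j ≠ 0) (n : ℕ) : poch q x n ≠ 0 :=
  Finset.prod_ne_zero_iff.2 fun j _ => h j

@[fun_prop]
lemma continuous_poch (n : ℕ) : Continuous fun x => poch q x n := by
  unfold poch
  fun_prop

variable {q}

lemma one_sub_mul_pow_mul_pow_ne_zero {x : ℂ} (h : ∀ j : ℕ, 1 - x * q ^ j ≠ 0) (m j : ℕ) :
    1 - x * q ^ m * q ^ j ≠ 0 := by
  rw [mul_assoc, ← pow_add]
  exact h _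

lemma norm_mul_pow_div_le (hq : ‖q‖ ≤ 1) (x y : ℂ) (m : ℕ) :
    ‖x * q ^ m / y‖ ≤ ‖x / y‖ := by
  rw [mul_div_right_comm, norm_mul, norm_pow]
  exact mul_le_of_le_one_right (norm_nonneg _) (pow_le_one₀ (norm_nonneg _) hq)

lemma one_sub_mul_pow_ne_zero (hq : ‖q‖ ≤ 1) {x : ℂ} (hx : ‖x‖ < 1) (j : ℕ) :
    1 - x * q ^ j ≠ 0 := by
  refine sub_ne_zero.2 fun h => (norm_mul_pow_div_le hq x 1 j).not_gt ?_
  simpa [← h] using hx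

lemma summable_norm_neg_mul_pow (hq : ‖q‖ < 1) (x : ℂ) :
    Summable fun j : ℕ => ‖-(x * q ^ j)‖ := by
  simpa [norm_mul, norm_pow] using
    (summable_geometric_of_lt_one (norm_nonneg q) hq).mul_left ‖x‖

lemma multipliable_one_sub_mul_pow (hq : ‖q‖ < 1) (x : ℂ) :
    Multipliable fun j : ℕ => 1 - x * q ^ j := by
  simpa [sub_eq_add_neg] using multipliable_one_add_of_summable (summable_norm_neg_mul_pow hq x)

lemma tendsto_poch (hq : ‖q‖ < 1) (x : ℂ) :
    Tendsto (poch q x) atTop (𝓝 (∏' j : ℕ, (1 - x * q ^ j))) :=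
  (multipliable_one_sub_mul_pow hq x).hasProd.tendsto_prod_nat

lemma tprod_one_sub_mul_pow_ne_zero (hq : ‖q‖ < 1) {x : ℂ}
    (h : ∀ j : ℕ, 1 - x * q ^ j ≠ 0) :
    ∏' j : ℕ, (1 - x * q ^ j) ≠ 0 := by
  simpa [sub_eq_add_neg] using tprod_one_add_ne_zero_of_summable
    (by simpa [sub_eq_add_neg] using h) (summable_norm_neg_mul_pow hq x)

lemma exists_norm_poch_le (hq : ‖q‖ < 1) (x : ℂ) : ∃ K, ∀ n, ‖poch q x n‖ ≤ K := by
  obtain ⟨K, hK⟩ := (tendsto_poch hq x).norm.bddAbove_range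
  exact ⟨K, fun n => hK ⟨n, rfl⟩⟩

lemma exists_norm_inv_poch_le (hq : ‖q‖ < 1) {x : ℂ} (h : ∀ j : ℕ, 1 - x * q ^ j ≠ 0) :
    ∃ M, ∀ n, ‖(poch q x n)⁻¹‖ ≤ M := by
  obtain ⟨M, hM⟩ :=
    ((tendsto_poch hq x).inv₀ (tprod_one_sub_mul_pow_ne_zero hq h)).norm.bddAbove_range
  exact ⟨M, fun n => hM ⟨n, rfl⟩⟩

end Pochhammer

noncomputable def qGaussTerm (q a b c : ℂ) (n : ℕ) : ℂ :=
  poch q a n * poch q b n / (poch q c n * poch q q n) * (c / (a * b)) ^ n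

noncomputable def qGaussSum (q a b c : ℂ) : ℂ :=
  ∑' n, qGaussTerm q a b c n

section Convergence

variable {q : ℂ} (a b : ℂ) {c : ℂ}

lemma qGaussTerm_zero_right (n : ℕ) : qGaussTerm q a b 0 n = if n = 0 then 1 else 0 := by
  cases n <;> simp [qGaussTerm]

lemma exists_norm_qGaussTerm_mul_pow_le (hq : ‖q‖ < 1) (hc : ∀ j : ℕ, 1 - c * q ^ j ≠ 0) :
    ∃ C, ∀ N n, ‖qGaussTerm q a b (c * q ^ N) n‖ ≤ C * ‖c / (a * b)‖ ^ n := by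
  obtain ⟨Ka, hKa⟩ := exists_norm_poch_le hq a
  obtain ⟨Kb, hKb⟩ := exists_norm_poch_le hq b
  obtain ⟨Kc, hKc⟩ := exists_norm_poch_le hq c
  obtain ⟨Mc, hMc⟩ := exists_norm_inv_poch_le hq hc
  obtain ⟨Mq, hMq⟩ := exists_norm_inv_poch_le hq (one_sub_mul_pow_ne_zero hq.le hq)
  have hKa0 : 0 ≤ Ka := (norm_nonneg _).trans (hKa 0)
  have hKb0 : 0 ≤ Kb := (norm_nonneg _).trans (hKb 0)
  have hKc0 : 0 ≤ Kc := (norm_nonneg _).trans (hKc 0)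
  have hMc0 : 0 ≤ Mc := (norm_nonneg _).trans (hMc 0)
  have hMq0 : 0 ≤ Mq := (norm_nonneg _).trans (hMq 0)
  refine ⟨Ka * Kb * (Kc * Mc) * Mq, fun N n => ?_⟩
  -- `(cqᴺ; q)ₙ = (c; q)_{N+n} / (c; q)_N` is bounded below uniformly in `N`
  have hshift : (poch q (c * q ^ N) n)⁻¹ = poch q c N * (poch q c (N + n))⁻¹ := by
    rw [poch_add, mul_inv, ← mul_assoc, mul_inv_cancel₀ (poch_ne_zero q hc N), one_mul]
  calc ‖qGaussTerm q a b (c * q ^ N) n‖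
      = ‖poch q a n‖ * ‖poch q b n‖ * (‖poch q c N‖ * ‖(poch q c (N + n))⁻¹‖)
          * ‖(poch q q n)⁻¹‖ * ‖c * q ^ N / (a * b)‖ ^ n := by
        rw [qGaussTerm, div_eq_mul_inv, mul_inv, hshift]
        simp only [norm_mul, norm_pow]
        ring
    _ ≤ Ka * Kb * (Kc * Mc) * Mq * ‖c / (a * b)‖ ^ n := by
        gcongr
        exacts [hKa n, hKb n, hKc N, hMc _, hMq n, norm_mul_pow_div_le hq.le c _ N]

lemma summable_qGaussTerm (hq : ‖q‖ < 1) (hc : ∀ j : ℕ, 1 - c * q ^ j ≠ 0)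
    (habc : ‖c / (a * b)‖ < 1) : Summable (qGaussTerm q a b c) := by
  obtain ⟨C, hC⟩ := exists_norm_qGaussTerm_mul_pow_le a b hq hc
  exact .of_norm_bounded ((summable_geometric_of_lt_one (norm_nonneg _) habc).mul_left C)
    fun n => by simpa using hC 0 n

lemma tendsto_qGaussSum_mul_pow (hq : ‖q‖ < 1) (hc : ∀ j : ℕ, 1 - c * q ^ j ≠ 0)
    (habc : ‖c / (a * b)‖ < 1) :
    Tendsto (fun N => qGaussSum q a b (c * q ^ N)) atTop (𝓝 1) := by
  obtain ⟨C, hC⟩ := exists_norm_qGaussTerm_mul_pow_le a b hq hc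
  have hcq : Tendsto (fun N => c * q ^ N) atTop (𝓝 0) := by
    simpa using (tendsto_pow_atTop_nhds_zero_of_norm_lt_one hq).const_mul c
  have hterm (n : ℕ) :
      Tendsto (fun N => qGaussTerm q a b (c * q ^ N) n) atTop (𝓝 (qGaussTerm q a b 0 n)) := by
    have hPq := poch_ne_zero q (one_sub_mul_pow_ne_zero hq.le hq) n
    have : ContinuousAt (fun x => qGaussTerm q a b x n) 0 := by
      unfold qGaussTerm
      fun_prop (disch := simpa)
    exact this.tendsto.comp hcq
  simpa [qGaussSum, qGaussTerm_zero_right] using tendsto_tsum_of_dominated_convergence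
    ((summable_geometric_of_lt_one (norm_nonneg _) habc).mul_left C) hterm (.of_forall hC)

end Convergence

section Contiguous

variable {q a b c : ℂ}

lemma qGaussTerm_succ (hq : ‖q‖ < 1) (hc : ∀ j : ℕ, 1 - c * q ^ j ≠ 0) (n : ℕ) :
    qGaussTerm q a b c (n + 1) * ((1 - c * q ^ n) * (1 - q ^ (n + 1))) =
      (1 - a * q ^ n) * (1 - b * q ^ n) * (c / (a * b)) * qGaussTerm q a b c n := by
  have hqn : 1 - q * q ^ n ≠ 0 := one_sub_mul_pow_ne_zero hq.le hq n
  have hPc := poch_ne_zero q hc n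
  have hPq := poch_ne_zero q (one_sub_mul_pow_ne_zero hq.le hq) n
  have hcn := hc n
  rw [qGaussTerm, qGaussTerm, poch_succ, poch_succ, poch_succ, poch_succ, pow_succ' q n]
  generalize c / (a * b) = z
  generalize q ^ n = Q at *
  generalize 1 - c * Q = u at *
  generalize 1 - q * Q = v at *
  field_simp
  ring

lemma qGaussTerm_shift (hc : ∀ j : ℕ, 1 - c * q ^ j ≠ 0) (n : ℕ) :
    (1 - c * q ^ n) * qGaussTerm q a b (c * q) n = (1 - c) * q ^ n * qGaussTerm q a b c n := by
  have hPc := poch_ne_zero q hc n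
  have hPcq := poch_ne_zero q (by simpa using one_sub_mul_pow_mul_pow_ne_zero hc 1) n
  have key : (1 - c * q ^ n) / poch q (c * q) n = (1 - c) / poch q c n := by
    rw [div_eq_div_iff hPcq hPc, mul_comm, ← poch_succ, add_comm, poch_add]
    simp [poch, mul_comm]
  rw [qGaussTerm, qGaussTerm, mul_div_right_comm c, mul_pow]
  linear_combination poch q a n * poch q b n * (c / (a * b)) ^ n * q ^ n / poch q q n * key

lemma qGaussTerm_contiguous (hq : ‖q‖ < 1) (ha : a ≠ 0) (hb : b ≠ 0)
    (hc : ∀ j : ℕ, 1 - c * q ^ j ≠ 0) (n : ℕ) :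
    (1 - c) * (1 - c / (a * b)) * qGaussTerm q a b c n
        - (1 - c / a) * (1 - c / b) * qGaussTerm q a b (c * q) n =
      (1 - c) * ((1 - q ^ n) * qGaussTerm q a b c n
        - (1 - q ^ (n + 1)) * qGaussTerm q a b c (n + 1)) := by
  refine mul_left_cancel₀ (hc n) ?_
  linear_combination (norm := (field_simp; ring))
    (1 - c) * qGaussTerm_succ (a := a) (b := b) hq hc n
      - (1 - c / a) * (1 - c / b) * qGaussTerm_shift (a := a) (b := b) hc n

lemma qGaussSum_contiguous (hq : ‖q‖ < 1) (ha : a ≠ 0) (hb : b ≠ 0)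
    (habc : ‖c / (a * b)‖ < 1) (hc : ∀ j : ℕ, 1 - c * q ^ j ≠ 0) :
    (1 - c) * (1 - c / (a * b)) * qGaussSum q a b c =
      (1 - c / a) * (1 - c / b) * qGaussSum q a b (c * q) := by
  have hs := summable_qGaussTerm a b hq hc habc
  have hs' : Summable (qGaussTerm q a b (c * q)) := by
    simpa using summable_qGaussTerm a b hq (one_sub_mul_pow_mul_pow_ne_zero hc 1)
      ((norm_mul_pow_div_le hq.le c (a * b) 1).trans_lt habc)
  have hu : Summable fun n => (1 - q ^ n) * qGaussTerm q a b c n := by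
    simp_rw [sub_mul, one_mul]
    refine hs.sub (.of_norm_bounded hs.norm fun n => ?_)
    rw [norm_mul, norm_pow]
    exact mul_le_of_le_one_left (norm_nonneg _) (pow_le_one₀ (norm_nonneg _) hq.le)
  rw [qGaussSum, qGaussSum, ← tsum_mul_left, ← tsum_mul_left, ← sub_eq_zero,
    ← (hs.mul_left _).tsum_sub (hs'.mul_left _)]
  simp_rw [qGaussTerm_contiguous hq ha hb hc, tsum_mul_left, hu.tsum_sub_add_one]
  simp

lemma qGaussSum_mul_poch (hq : ‖q‖ < 1) (ha : a ≠ 0) (hb : b ≠ 0)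
    (habc : ‖c / (a * b)‖ < 1) (hc : ∀ j : ℕ, 1 - c * q ^ j ≠ 0) (N : ℕ) :
    qGaussSum q a b c * (poch q c N * poch q (c / (a * b)) N) =
      poch q (c / a) N * poch q (c / b) N * qGaussSum q a b (c * q ^ N) := by
  induction N with
  | zero => simp
  | succ N ih =>
    have h := qGaussSum_contiguous hq ha hb ((norm_mul_pow_div_le hq.le c _ N).trans_lt habc)
      (one_sub_mul_pow_mul_pow_ne_zero hc N)
    rw [mul_assoc c, ← pow_succ, mul_div_right_comm c, mul_div_right_comm c,
      mul_div_right_comm c] at h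
    simp only [poch_succ]
    linear_combination (1 - c * q ^ N) * (1 - c / (a * b) * q ^ N) * ih
      + poch q (c / a) N * poch q (c / b) N * h

end Contiguous

theorem stmt3_general (q a b c : ℂ) (hq1 : ‖q‖ < 1)
    (ha : a ≠ 0) (hb : b ≠ 0) (habc : ‖c / (a * b)‖ < 1)
    (hc : ∀ j : ℕ, c * q ^ j ≠ 1) :
    ∑' n : ℕ, poch q a n * poch q b n / (poch q c n * poch q q n) * (c / (a * b)) ^ n =
      (∏' j : ℕ, (1 - c / a * q ^ j)) * (∏' j : ℕ, (1 - c / b * q ^ j)) /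
        ((∏' j : ℕ, (1 - c * q ^ j)) * ∏' j : ℕ, (1 - c / (a * b) * q ^ j)) := by
  have hc' : ∀ j : ℕ, 1 - c * q ^ j ≠ 0 := fun j => sub_ne_zero.2 (hc j).symm
  have hlim := tendsto_nhds_unique
    ((tendsto_const_nhds.mul ((tendsto_poch hq1 c).mul (tendsto_poch hq1 _))).congr
      (qGaussSum_mul_poch hq1 ha hb habc hc'))
    (((tendsto_poch hq1 _).mul (tendsto_poch hq1 _)).mul
      (tendsto_qGaussSum_mul_pow a b hq1 hc' habc))
  rw [mul_one] at hlim
  exact (eq_div_iff (mul_ne_zero (tprod_one_sub_mul_pow_ne_zero hq1 hc')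
    (tprod_one_sub_mul_pow_ne_zero hq1 (one_sub_mul_pow_ne_zero hq1.le habc)))).2 hlim

/-- The q-Gauss summation:
`₂φ₁(a,b;c;q,c/(ab)) = (c/a;q)_∞ (c/b;q)_∞ / ((c;q)_∞ (c/(ab);q)_∞)`. -/
theorem stmt3 (q a b c : ℂ) (hq0 : 0 < ‖q‖) (hq1 : ‖q‖ < 1)
    (ha : a ≠ 0) (hb : b ≠ 0) (habc : ‖c / (a * b)‖ < 1)
    (hc : ∀ j : ℕ, c * q ^ j ≠ 1) :
    ∑' n : ℕ, poch q a n * poch q b n / (poch q c n * poch q q n) * (c / (a * b)) ^ n =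
      (∏' j : ℕ, (1 - c / a * q ^ j)) * (∏' j : ℕ, (1 - c / b * q ^ j)) /
        ((∏' j : ℕ, (1 - c * q ^ j)) * ∏' j : ℕ, (1 - c / (a * b) * q ^ j)) :=
  stmt3_general q a b c hq1 ha hb habc hc
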